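/- Let F be a 2-factor of a graph G with the minimum number of components, and let C and D be two distinct cycles of F. If x ∈ V(C) and y ∈ V(D) are adjacent in G, then there is no edge of G between {x⁻, x⁺} and {y⁻, y⁺}, where x⁺, x⁻ denote the successor and predecessor of x on its cycle (with fixed orientations). -/

import Mathlib

open SimpleGraph

/-- A set of vertices is independent: no two of its members are adjacent. -/
def IsIndepSet {V : Type*} (G : SimpleGraph V) (s : Set V) : Prop :=
  ∀ x ∈ s, ∀ y ∈ s, ¬ G.Adj x y

/-- `G` contains no induced `2K₂`: there are no two disjoint edges with no
edge of `G` between them. -/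
def TwoK2Free {V : Type*} (G : SimpleGraph V) : Prop :=
  ¬ ∃ a b c d : V, G.Adj a b ∧ G.Adj c d ∧ a ≠ c ∧ a ≠ d ∧ b ≠ c ∧ b ≠ d ∧
    ¬ G.Adj a c ∧ ¬ G.Adj a d ∧ ¬ G.Adj b c ∧ ¬ G.Adj b d

/-- The independence number of `G`. -/
noncomputable def indepNum {V : Type*} [Fintype V] (G : SimpleGraph V) : ℕ :=
  sSup {n | ∃ s : Finset V, _root_.IsIndepSet G ↑s ∧ s.card = n}

/-- The number of connected components of a graph. -/
noncomputable def compCount {W : Type*} (H : SimpleGraph W) : ℕ :=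
  Nat.card H.ConnectedComponent

/-- `G` is `t`-tough: whenever removing a vertex set `S` disconnects the rest
into more than one component, `|S| ≥ t · ω(G − S)`. -/
def Tough {V : Type*} [Fintype V] (t : ℝ) (G : SimpleGraph V) : Prop :=
  ∀ S : Finset V,
    1 < compCount (G.induce ((↑S : Set V)ᶜ)) →
    t * compCount (G.induce ((↑S : Set V)ᶜ)) ≤ S.card

/-- An (oriented) `2`-factor of `G`, encoded as a permutation `σ` of the
vertices: each vertex is adjacent to its successor `σ x`, and every cycle of
`σ` has length at least `3`.  The cycles of `σ` are exactly the cycles of the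
`2`-factor, with a fixed orientation; the successor of `x` is `σ x` and its
predecessor is `σ⁻¹ x`. -/
def IsTwoFactor {V : Type*} (G : SimpleGraph V) (σ : Equiv.Perm V) : Prop :=
  ∀ x : V, G.Adj x (σ x) ∧ σ (σ x) ≠ x

/-- The number of components (cycles) of a `2`-factor encoded as a permutation. -/
noncomputable def numCycles {V : Type*} [Fintype V] (σ : Equiv.Perm V) : ℕ :=
  (@Equiv.Perm.cycleType V _ (Classical.decEq V) σ).card

/-- `σ` is a `2`-factor of `G` with the minimum number of components. -/
def IsMinTwoFactor {V : Type*} [Fintype V] (G : SimpleGraph V) (σ : Equiv.Perm V) : Prop :=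
  IsTwoFactor G σ ∧ ∀ τ : Equiv.Perm V, IsTwoFactor G τ → numCycles σ ≤ numCycles τ

/-- An (oriented) `2`-factor of `G − x`, encoded as a permutation of `V`
fixing `x`. -/
def IsTwoFactorAvoiding {V : Type*} (G : SimpleGraph V) (x : V) (σ' : Equiv.Perm V) : Prop :=
  σ' x = x ∧ ∀ y : V, y ≠ x → G.Adj y (σ' y) ∧ σ' (σ' y) ≠ y

/-- `x` is co-absorbable w.r.t. the `2`-factor `σ`: `G − x` has a `2`-factor
with strictly fewer components than `σ`. -/
def CoAbsorbable {V : Type*} [Fintype V] (G : SimpleGraph V) (σ : Equiv.Perm V) (x : V) : Prop :=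
  ∃ σ' : Equiv.Perm V, IsTwoFactorAvoiding G x σ' ∧ numCycles σ' < numCycles σ

/-- `x` is of `A`-type w.r.t. the `2`-factor `σ`: some other cycle of `σ`
contains two consecutive vertices `z`, `σ z` both adjacent to `x`. -/
def AType {V : Type*} (G : SimpleGraph V) (σ : Equiv.Perm V) (x : V) : Prop :=
  ∃ z : V, ¬ σ.SameCycle x z ∧ G.Adj x z ∧ G.Adj x (σ z)

/-- The degree of a vertex. -/
noncomputable def vdeg {V : Type*} (G : SimpleGraph V) (x : V) : ℕ :=
  Nat.card (G.neighborSet x)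

/-!
If `x ~ y` lie on different cycles `C ≠ D` of `F` and `x⁺ ~ y⁻`, then replacing the edges
`x x⁺` and `y⁻ y` of `F` by `x y` and `x⁺ y⁻` merges `C` and `D` into one cycle; as a
permutation this is `σ * swap x y⁻`, which has one cycle fewer than `σ`, contradicting
minimality. The pairs `(x⁺, y⁺)` and `(x⁻, y⁻)` reduce to this case by first reversing the
orientation of one of the two cycles, and `(x⁻, y⁺)` by reversing all of them (`σ⁻¹`).
-/

namespace Equiv.Perm

variable {α : Type*}

section SameCycle

variable [Finite α] {σ τ : Perm α} {a b z : α}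

theorem SameCycle.of_forall_sameCycle_apply (h : ∀ u, σ.SameCycle u (τ u))
    (hab : τ.SameCycle a b) : σ.SameCycle a b := by
  suffices ∀ n : ℕ, σ.SameCycle a ((τ ^ n) a) by
    obtain ⟨n, rfl⟩ := hab.exists_nat_pow_eq
    exact this n
  intro n
  induction n with
  | zero => exact SameCycle.rfl
  | succ n ih => rw [pow_succ', mul_apply]; exact ih.trans (h _)

/-- Walking around the `σ`-cycle of `b` from `σ b`, `τ` follows `σ` until it reaches `b`. -/
theorem SameCycle.sameCycle_apply_of_eq_off (h : ∀ u, σ.SameCycle b u → u ≠ b → τ u = σ u)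
    (hz : σ.SameCycle b z) : τ.SameCycle (σ b) z := by
  suffices ∀ n : ℕ, τ.SameCycle (σ b) ((σ ^ n) (σ b)) by
    obtain ⟨n, rfl⟩ := (sameCycle_apply_left.2 hz).exists_nat_pow_eq
    exact this n
  intro n
  induction n with
  | zero => exact SameCycle.rfl
  | succ n ih =>
    rw [pow_succ', mul_apply]
    by_cases hub : (σ ^ n) (σ b) = b
    · rw [hub]
    · rw [← h _ (by simp [SameCycle.rfl]) hub]
      exact ih.trans (sameCycle_apply_right.2 SameCycle.rfl)

end SameCycle

variable [DecidableEq α] [Fintype α] {σ : Perm α} {x w : α}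

theorem cycleOf_mul_cycleOf_apply (hxw : ¬σ.SameCycle x w) (z : α) :
    (σ.cycleOf x * σ.cycleOf w) z = if σ.SameCycle x z ∨ σ.SameCycle w z then σ z else z := by
  by_cases hwz : σ.SameCycle w z
  · have hxz : ¬σ.SameCycle x (σ z) := fun h => hxw (h.trans (hwz.apply_right).symm)
    simp [cycleOf_apply, hwz, hxz]
  · simp [cycleOf_apply, hwz]

theorem isCycle_cycleOf_mul_cycleOf_mul_swap (hxw : ¬σ.SameCycle x w) :
    (σ.cycleOf x * σ.cycleOf w * swap x w).IsCycle := by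
  set g := σ.cycleOf x * σ.cycleOf w * swap x w
  have hg : ∀ z, g z = (σ.cycleOf x * σ.cycleOf w) (swap x w z) := fun _ => rfl
  have hgx : g x = σ w := by simp [hg, cycleOf_mul_cycleOf_apply hxw, SameCycle.rfl]
  have hgw : g w = σ x := by simp [hg, cycleOf_mul_cycleOf_apply hxw, SameCycle.rfl]
  have hg_off : ∀ z, z ≠ x → z ≠ w →
      g z = if σ.SameCycle x z ∨ σ.SameCycle w z then σ z else z := by
    intro z hzx hzw
    rw [hg, swap_apply_of_ne_of_ne hzx hzw, cycleOf_mul_cycleOf_apply hxw]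
  have hw_cycle : ∀ z, σ.SameCycle w z → g.SameCycle x z := by
    refine fun z hz =>
      sameCycle_apply_left.1 (hgx ▸ hz.sameCycle_apply_of_eq_off fun u hu huw => ?_)
    have hux : u ≠ x := fun h => hxw (h ▸ hu).symm
    rw [hg_off u hux huw, if_pos (Or.inr hu)]
  have hx_cycle : ∀ z, σ.SameCycle x z → g.SameCycle x z := by
    refine fun z hz => (hw_cycle w .rfl).trans
      (sameCycle_apply_left.1 (hgw ▸ hz.sameCycle_apply_of_eq_off fun u hu hux => ?_))
    have huw : u ≠ w := fun h => hxw (h ▸ hu)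
    rw [hg_off u hux huw, if_pos (Or.inl hu)]
  refine ⟨x, fun h => hxw ?_, fun y hy => ?_⟩
  · rw [← hgx.symm.trans h]
    exact (sameCycle_apply_right.2 .rfl).symm
  · by_cases hyx : y = x
    · exact hyx ▸ .rfl
    by_cases hyw : y = w
    · exact hyw ▸ hw_cycle w .rfl
    rw [hg_off y hyx hyw] at hy
    split_ifs at hy with hP
    · exact hP.elim (hx_cycle y) (hw_cycle y)
    · exact absurd rfl hy

theorem card_cycleType_mul_swap_add_one (hx : σ x ≠ x) (hw : σ w ≠ w)
    (hxw : ¬σ.SameCycle x w) :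
    Multiset.card (σ * swap x w).cycleType + 1 = Multiset.card σ.cycleType := by
  set c := σ.cycleOf x * σ.cycleOf w
  set ρ := c⁻¹ * σ
  have hc := cycleOf_mul_cycleOf_apply hxw
  have hρ : ∀ z, ρ z = if σ.SameCycle x z ∨ σ.SameCycle w z then z else σ z := by
    intro z
    rw [mul_apply, inv_eq_iff_eq, hc]
    split_ifs <;> simp_all
  have disjoint_ρ : ∀ f : Perm α, (∀ z, ¬(σ.SameCycle x z ∨ σ.SameCycle w z) → f z = z) →
      Disjoint f ρ := by
    intro f hf z
    by_cases hP : σ.SameCycle x z ∨ σ.SameCycle w z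
    · exact .inr (by rw [hρ, if_pos hP])
    · exact .inl (hf z hP)
  have hcycles : Disjoint (σ.cycleOf x) (σ.cycleOf w) := by
    intro z
    by_cases hxz : σ.SameCycle x z
    · exact .inr (cycleOf_apply_of_not_sameCycle fun hwz => hxw (hxz.trans hwz.symm))
    · exact .inl (cycleOf_apply_of_not_sameCycle hxz)
  have hcρ : Disjoint c ρ := disjoint_ρ c fun z hP => by rw [hc, if_neg hP]
  have hgρ : Disjoint (c * swap x w) ρ := by
    refine disjoint_ρ _ fun z hP => ?_
    have hzx : z ≠ x := fun h => hP (.inl (h ▸ .rfl))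
    have hzw : z ≠ w := fun h => hP (.inr (h ▸ .rfl))
    rw [mul_apply, swap_apply_of_ne_of_ne hzx hzw, hc, if_neg hP]
  have hρ_swap : ρ * swap x w = swap x w * ρ := by
    rw [mul_swap_eq_swap_mul, hρ, hρ, if_pos (.inl .rfl), if_pos (.inr .rfl)]
  have hσ : σ = c * ρ := (mul_inv_cancel_left c σ).symm
  have hσ_swap : σ * swap x w = c * swap x w * ρ := by
    rw [hσ, mul_assoc, hρ_swap, ← mul_assoc]
  rw [hσ_swap, hgρ.cycleType_mul, Multiset.card_add,
    card_cycleType_eq_one.2 (isCycle_cycleOf_mul_cycleOf_mul_swap hxw),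
    hσ, hcρ.cycleType_mul, hcycles.cycleType_mul, Multiset.card_add, Multiset.card_add,
    card_cycleType_eq_one.2 (isCycle_cycleOf σ hx), card_cycleType_eq_one.2 (isCycle_cycleOf σ hw)]
  omega

def reverseCycleOf (σ : Perm α) (v : α) : Perm α :=
  σ * (σ.cycleOf v)⁻¹ * (σ.cycleOf v)⁻¹

theorem reverseCycleOf_apply (σ : Perm α) (v z : α) :
    σ.reverseCycleOf v z = if σ.SameCycle v z then σ⁻¹ z else σ z := by
  have hinv : ∀ u, (σ.cycleOf v)⁻¹ u = if σ.SameCycle v u then σ⁻¹ u else u := by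
    intro u
    rw [cycleOf_inv, cycleOf_apply]
    simp only [sameCycle_inv]
  have hv_inv : σ.SameCycle v z → σ.SameCycle v (σ⁻¹ z) := fun h => h.trans ⟨-1, by simp⟩
  simp only [reverseCycleOf, mul_apply, hinv]
  split_ifs <;> simp_all

theorem cycleType_reverseCycleOf (σ : Perm α) (v : α) :
    (σ.reverseCycleOf v).cycleType = σ.cycleType := by
  by_cases hv : σ v = v
  · simp [reverseCycleOf, (cycleOf_eq_one_iff σ).2 hv]
  have hd := disjoint_mul_inv_of_mem_cycleFactorsFinset
    (cycleOf_mem_cycleFactorsFinset_iff.2 (mem_support.2 hv))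
  conv_rhs => rw [← inv_mul_cancel_right σ (σ.cycleOf v)]
  rw [reverseCycleOf, hd.cycleType_mul, hd.inv_right.cycleType_mul, cycleType_inv]

theorem SameCycle.of_reverseCycleOf {v a b : α} (h : (σ.reverseCycleOf v).SameCycle a b) :
    σ.SameCycle a b := by
  refine h.of_forall_sameCycle_apply fun u => ?_
  rw [reverseCycleOf_apply]
  split_ifs
  · exact ⟨-1, by simp⟩
  · exact sameCycle_apply_right.2 .rfl

end Equiv.Perm

open Equiv Equiv.Perm

section TwoFactor

variable {V : Type*} {G : SimpleGraph V} {σ : Perm V}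

theorem numCycles_eq_card_cycleType [Fintype V] [DecidableEq V] (σ : Perm V) :
    numCycles σ = Multiset.card σ.cycleType := by
  unfold numCycles
  congr

theorem IsTwoFactor.apply_ne (hσ : IsTwoFactor G σ) (z : V) : σ z ≠ z :=
  (hσ z).1.ne'

theorem IsTwoFactor.inv (hσ : IsTwoFactor G σ) : IsTwoFactor G σ⁻¹ := by
  intro z
  refine ⟨by simpa using (hσ (σ⁻¹ z)).1.symm, fun h => (hσ z).2 ?_⟩
  simpa using (congrArg (fun u => σ (σ u)) h).symm

theorem IsTwoFactor.reverseCycleOf [Fintype V] [DecidableEq V] (hσ : IsTwoFactor G σ) (v : V) :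
    IsTwoFactor G (σ.reverseCycleOf v) := by
  intro z
  by_cases hvz : σ.SameCycle v z
  · have hvz' : σ.SameCycle v (σ⁻¹ z) := hvz.trans ⟨-1, by simp⟩
    simpa [reverseCycleOf_apply, hvz, hvz'] using hσ.inv z
  · have hvz' : ¬σ.SameCycle v (σ z) := fun h => hvz (sameCycle_apply_right.1 h)
    simpa [reverseCycleOf_apply, hvz, hvz'] using hσ z

theorem IsTwoFactor.mul_swap_apply_apply_ne [DecidableEq V] (hσ : IsTwoFactor G σ) {x w : V}
    (hxw : ¬σ.SameCycle x w) {z : V} (hz : z = x ∨ σ z = x) :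
    (σ * swap x w) ((σ * swap x w) z) ≠ z := by
  have hσw : σ.SameCycle w (σ w) := sameCycle_apply_right.2 .rfl
  have hτx : (σ * swap x w) x = σ w := by simp
  rcases hz with rfl | hσz
  · have hσw_ne_z : σ w ≠ z := fun h => hxw (h ▸ hσw).symm
    rw [hτx, mul_apply, swap_apply_of_ne_of_ne hσw_ne_z (hσ.apply_ne w)]
    exact fun h => hxw (h ▸ sameCycle_apply_right.2 hσw).symm
  · have hzx : σ.SameCycle z x := hσz ▸ sameCycle_apply_right.2 .rfl
    have hz_ne_x : z ≠ x := fun h => hσ.apply_ne z (hσz.trans h.symm)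
    have hz_ne_w : z ≠ w := fun h => hxw (h ▸ hzx).symm
    have hτz : (σ * swap x w) z = x := by
      rw [mul_apply, swap_apply_of_ne_of_ne hz_ne_x hz_ne_w, hσz]
    rw [hτz, hτx]
    exact fun h => hxw (hzx.symm.trans (h ▸ hσw).symm)

theorem IsTwoFactor.mul_swap [DecidableEq V] (hσ : IsTwoFactor G σ) {x w : V}
    (hxw : ¬σ.SameCycle x w) (hx : G.Adj x (σ w)) (hw : G.Adj w (σ x)) :
    IsTwoFactor G (σ * swap x w) := by
  have hτ : ∀ z, z ≠ x → z ≠ w → (σ * swap x w) z = σ z := fun z hzx hzw => by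
    rw [mul_apply, swap_apply_of_ne_of_ne hzx hzw]
  intro z
  constructor
  · by_cases hzx : z = x
    · simpa [hzx] using hx
    by_cases hzw : z = w
    · simpa [hzw] using hw
    exact hτ z hzx hzw ▸ (hσ z).1
  · by_cases hx_end : z = x ∨ σ z = x
    · exact hσ.mul_swap_apply_apply_ne hxw hx_end
    by_cases hw_end : z = w ∨ σ z = w
    · exact swap_comm x w ▸ hσ.mul_swap_apply_apply_ne (fun h => hxw h.symm) hw_end
    obtain ⟨hzx, hσzx⟩ := not_or.1 hx_end
    obtain ⟨hzw, hσzw⟩ := not_or.1 hw_end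
    rw [hτ z hzx hzw, hτ (σ z) hσzx hσzw]
    exact (hσ z).2

variable [Fintype V]

theorem IsMinTwoFactor.inv (hσ : IsMinTwoFactor G σ) : IsMinTwoFactor G σ⁻¹ := by
  classical
  refine ⟨hσ.1.inv, fun τ hτ => ?_⟩
  rw [numCycles_eq_card_cycleType, cycleType_inv, ← numCycles_eq_card_cycleType]
  exact hσ.2 τ hτ

theorem IsMinTwoFactor.reverseCycleOf [DecidableEq V] (hσ : IsMinTwoFactor G σ) (v : V) :
    IsMinTwoFactor G (σ.reverseCycleOf v) := by
  refine ⟨hσ.1.reverseCycleOf v, fun τ hτ => ?_⟩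
  rw [numCycles_eq_card_cycleType, cycleType_reverseCycleOf, ← numCycles_eq_card_cycleType]
  exact hσ.2 τ hτ

theorem IsMinTwoFactor.not_adj_apply_of_adj_apply (hσ : IsMinTwoFactor G σ) {x w : V}
    (hxw : ¬σ.SameCycle x w) (hx : G.Adj x (σ w)) : ¬G.Adj w (σ x) := by
  classical
  intro hw
  have hmin := hσ.2 _ (hσ.1.mul_swap hxw hx hw)
  have hmerge := card_cycleType_mul_swap_add_one (hσ.1.apply_ne x) (hσ.1.apply_ne w) hxw
  rw [numCycles_eq_card_cycleType, numCycles_eq_card_cycleType] at hmin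
  omega

theorem IsMinTwoFactor.not_adj_apply_inv_apply (hσ : IsMinTwoFactor G σ) {x y : V}
    (hxy : G.Adj x y) (hCD : ¬σ.SameCycle x y) : ¬G.Adj (σ x) (σ⁻¹ y) := fun h =>
  hσ.not_adj_apply_of_adj_apply (fun h' => hCD (sameCycle_symm_apply_right.1 h'))
    (by simpa using hxy) h.symm

theorem IsMinTwoFactor.not_adj_apply_apply (hσ : IsMinTwoFactor G σ) {x y : V}
    (hxy : G.Adj x y) (hCD : ¬σ.SameCycle x y) : ¬G.Adj (σ x) (σ y) := by
  classical
  have hx : σ.reverseCycleOf y x = σ x := by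
    rw [reverseCycleOf_apply, if_neg fun h => hCD h.symm]
  have hy : (σ.reverseCycleOf y)⁻¹ y = σ y := by
    rw [inv_eq_iff_eq, reverseCycleOf_apply, if_pos (sameCycle_apply_right.2 .rfl)]
    simp
  simpa [hx, hy] using (hσ.reverseCycleOf y).not_adj_apply_inv_apply hxy
    fun h => hCD h.of_reverseCycleOf

end TwoFactor

theorem stmt5 {V : Type*} [Fintype V] (G : SimpleGraph V) (σ : Equiv.Perm V)
    (hσ : IsMinTwoFactor G σ) (x y : V) (hxy : G.Adj x y)
    (hCD : ¬ σ.SameCycle x y) :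
    ∀ a b : V, (a = σ x ∨ a = σ⁻¹ x) → (b = σ y ∨ b = σ⁻¹ y) → ¬ G.Adj a b := by
  have hCD_inv : ¬σ⁻¹.SameCycle x y := by rwa [sameCycle_inv]
  rintro a b (rfl | rfl) (rfl | rfl)
  · exact hσ.not_adj_apply_apply hxy hCD
  · exact hσ.not_adj_apply_inv_apply hxy hCD
  · simpa using hσ.inv.not_adj_apply_inv_apply hxy hCD_inv
  · exact hσ.inv.not_adj_apply_apply hxy hCD_inv
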